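/- Lemma (fairness needed in threshold step, DP case): For the dataset of six points in ℝ² × [4] × {0,1} given by (x,y,a) = ((1,0),1,0), ((2,0),1,0), ((3,1),1,1), ((4,1),1,1), ((5,0),2,0), ((6,0),2,0): the scoring function p₁(u₁,u₂)=u₁ satisfies empirical pairwise DP as a scoring function (the number of ordered cross-group pairs with s-value of the group-0 point larger equals the number with it smaller), yet the thresholded predictor with θ₁ = 4.5, θ₂ = θ₃ = 7 achieves MAE = 0 on this dataset but has empirical DPviol = 1/2. -/

import Mathlib

open Finset

/-- The six datapoints `(1,0),(2,0),(3,1),(4,1),(5,0),(6,0)` in `ℝ²`. -/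
noncomputable def lem2X : Fin 6 → ℝ × ℝ :=
  ![(1, 0), (2, 0), (3, 1), (4, 1), (5, 0), (6, 0)]

/-- Labels `1,1,1,1,2,2`. -/
def lem2Y : Fin 6 → ℕ := ![1, 1, 1, 1, 2, 2]

/-- Groups `0,0,1,1,0,0`. -/
def lem2A : Fin 6 → ℕ := ![0, 0, 1, 1, 0, 0]

/-- Threshold predictor with thresholds `θ₁ = 4.5`, `θ₂ = θ₃ = 7` applied to the
first-coordinate scoring function `p₁`. -/
noncomputable def lem2F (i : Fin 6) : ℕ :=
  if (lem2X i).1 ≤ 4.5 then 1 else if (lem2X i).1 ≤ 7 then 2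
  else if (lem2X i).1 ≤ 7 then 3 else 4

/-!
The first coordinates are `1, …, 6` and the two group-1 points sit in the middle, at `3` and `4`;
so among the `8` cross-group pairs the group-0 point scores higher in `4` and lower in `4`.
Thresholding at `4.5` reproduces the labels exactly, but gives the group-1 points the same label
as the two lowest group-0 points: the `4` "lower" pairs become ties while the `4` "higher" ones
survive, and the violation is `4/8 - 0/8 = 1/2`.
-/

theorem fst_lem2X (i : Fin 6) : (lem2X i).1 = (i : ℕ) + 1 := by
  fin_cases i <;> norm_num [lem2X]

theorem lem2F_eq_lem2Y : lem2F = lem2Y := by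
  funext i
  fin_cases i <;> norm_num [lem2F, lem2X, lem2Y]

theorem card_crossGroupPairs :
    (univ.filter (fun p : Fin 6 × Fin 6 => lem2A p.1 = 0 ∧ lem2A p.2 = 1)).card = 8 := by
  decide

theorem card_crossGroupPairs_lem2Y_gt :
    (univ.filter (fun p : Fin 6 × Fin 6 =>
      lem2A p.1 = 0 ∧ lem2A p.2 = 1 ∧ lem2Y p.2 < lem2Y p.1)).card = 4 := by
  decide

theorem card_crossGroupPairs_lem2Y_lt :
    (univ.filter (fun p : Fin 6 × Fin 6 =>
      lem2A p.1 = 0 ∧ lem2A p.2 = 1 ∧ lem2Y p.1 < lem2Y p.2)).card = 0 := by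
  decide

/-- Lemma (fairness needed in the threshold step, DP case): on the dataset above,
the scoring function `p₁(u) = u₁` satisfies empirical pairwise DP (equal counts of
cross-group ordered pairs with larger/smaller score), and the thresholded predictor
with `θ₁ = 4.5, θ₂ = θ₃ = 7` has MAE `0` but empirical DP violation `1/2`. -/
theorem fairness_needed_in_threshold_step_DP :
    -- the scoring function p₁ satisfies empirical pairwise DP
    (univ.filter (fun p : Fin 6 × Fin 6 =>
        lem2A p.1 = 0 ∧ lem2A p.2 = 1 ∧ (lem2X p.2).1 < (lem2X p.1).1)).card =
      (univ.filter (fun p : Fin 6 × Fin 6 =>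
        lem2A p.1 = 0 ∧ lem2A p.2 = 1 ∧ (lem2X p.1).1 < (lem2X p.2).1)).card ∧
    -- the thresholded predictor has MAE 0
    (∑ i, |(lem2Y i : ℚ) - (lem2F i : ℚ)|) / 6 = 0 ∧
    -- but empirical DP violation 1/2
    |((univ.filter (fun p : Fin 6 × Fin 6 =>
          lem2A p.1 = 0 ∧ lem2A p.2 = 1 ∧ lem2F p.2 < lem2F p.1)).card : ℚ) /
        ((univ.filter (fun p : Fin 6 × Fin 6 =>
          lem2A p.1 = 0 ∧ lem2A p.2 = 1)).card : ℚ) -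
      ((univ.filter (fun p : Fin 6 × Fin 6 =>
          lem2A p.1 = 0 ∧ lem2A p.2 = 1 ∧ lem2F p.1 < lem2F p.2)).card : ℚ) /
        ((univ.filter (fun p : Fin 6 × Fin 6 =>
          lem2A p.1 = 0 ∧ lem2A p.2 = 1)).card : ℚ)| = 1 / 2 := by
  simp only [fst_lem2X, add_lt_add_iff_right, Nat.cast_lt, lem2F_eq_lem2Y, card_crossGroupPairs,
    card_crossGroupPairs_lem2Y_gt, card_crossGroupPairs_lem2Y_lt]
  refine ⟨by decide, by simp, by norm_num⟩
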